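/- arXiv:1407.6076 — 3 statements merged into one kernel-verified Lean document; each statement's English description precedes it below -/
import Mathlib

section
/- If X is an n×n Metzler matrix (all off-diagonal entries nonnegative) and there exists a vector ξ with all entries strictly positive such that Xξ has all entries strictly negative, then X is Hurwitz, i.e., every eigenvalue of X has strictly negative real part. -/
/-!
Weighted Gershgorin: conjugating by `diagonal ξ` does not change the spectrum and turns the
Gershgorin disc of row `k` into the disc of centre `X k k` and radius `∑_{j ≠ k} X k j ξ j / ξ k`.
For a Metzler `X` with `(X ξ) k < 0` this radius is less than `-X k k`, so the disc lies in the
open left half-plane.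
-/

open Matrix Set Filter

noncomputable def matSpec {n : ℕ} (X : Matrix (Fin n) (Fin n) ℝ) : Set ℂ :=
  spectrum ℂ (X.map (Complex.ofReal))

def IsMetzler {n : ℕ} (X : Matrix (Fin n) (Fin n) ℝ) : Prop :=
  ∀ i j, i ≠ j → 0 ≤ X i j

def IsHurwitz {n : ℕ} (X : Matrix (Fin n) (Fin n) ℝ) : Prop :=
  ∀ z ∈ matSpec X, z.re < 0

def MatIrreducible {n : ℕ} (X : Matrix (Fin n) (Fin n) ℝ) : Prop :=
  ∀ S : Finset (Fin n), S.Nonempty → S ≠ Finset.univ → ∃ i ∈ S, ∃ j ∉ S, X i j ≠ 0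

noncomputable def spectralAbscissa {n : ℕ} (X : Matrix (Fin n) (Fin n) ℝ) : ℝ :=
  sSup (Complex.re '' matSpec X)

noncomputable def spectralRadiusR {n : ℕ} (X : Matrix (Fin n) (Fin n) ℝ) : ℝ :=
  sSup ((fun z : ℂ => ‖z‖) '' matSpec X)

section Gershgorin

variable {K n : Type*} [NormedField K] [Fintype n] [DecidableEq n]

theorem Matrix.spectrum_diagonal_inv_mul_mul_diagonal (A : Matrix n n K) {w : n → K}
    (hw : ∀ i, w i ≠ 0) : spectrum K (diagonal w⁻¹ * A * diagonal w) = spectrum K A := by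
  let u : (Matrix n n K)ˣ :=
    ⟨diagonal w⁻¹, diagonal w, by simp [diagonal_mul_diagonal, hw],
      by simp [diagonal_mul_diagonal, hw]⟩
  exact spectrum.units_conjugate (u := u)

theorem eigenvalue_mem_ball_weighted {A : Matrix n n K} {w : n → K} (hw : ∀ i, w i ≠ 0)
    {μ : K} (hμ : Module.End.HasEigenvalue (toLin' A) μ) :
    ∃ k, μ ∈ Metric.closedBall (A k k) (∑ j ∈ Finset.univ.erase k, ‖A k j‖ * ‖w j‖ / ‖w k‖) := by
  have hμ' : Module.End.HasEigenvalue (toLin' (diagonal w⁻¹ * A * diagonal w)) μ := by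
    rw [Module.End.hasEigenvalue_iff_mem_spectrum, spectrum_toLin',
      spectrum_diagonal_inv_mul_mul_diagonal A hw]
    rwa [Module.End.hasEigenvalue_iff_mem_spectrum, spectrum_toLin'] at hμ
  obtain ⟨k, hk⟩ := eigenvalue_mem_ball hμ'
  refine ⟨k, ?_⟩
  convert hk using 2
  · simp only [diagonal_mul, mul_diagonal, Pi.inv_apply]
    rw [mul_right_comm, inv_mul_cancel₀ (hw k), one_mul]
  · refine Finset.sum_congr rfl fun j _ => ?_
    simp only [diagonal_mul, mul_diagonal, Pi.inv_apply, norm_mul, norm_inv]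
    ring

end Gershgorin

theorem mem_matSpec_iff_hasEigenvalue {n : ℕ} {X : Matrix (Fin n) (Fin n) ℝ} {z : ℂ} :
    z ∈ matSpec X ↔ Module.End.HasEigenvalue (toLin' (X.map Complex.ofReal)) z := by
  rw [Module.End.hasEigenvalue_iff_mem_spectrum, spectrum_toLin', matSpec]

theorem IsMetzler.sum_erase_abs_mul_div_lt {n : ℕ} {X : Matrix (Fin n) (Fin n) ℝ}
    (hM : IsMetzler X) {ξ : Fin n → ℝ} {k : Fin n} (hξk : 0 < ξ k) (hXξk : (X *ᵥ ξ) k < 0) :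
    ∑ j ∈ Finset.univ.erase k, |X k j| * ξ j / ξ k < -X k k := by
  have hoff : ∑ j ∈ Finset.univ.erase k, |X k j| * ξ j = (X *ᵥ ξ) k - X k k * ξ k := by
    rw [mulVec, dotProduct, ← Finset.sum_erase_eq_sub (Finset.mem_univ k)]
    refine Finset.sum_congr rfl fun j hj => ?_
    rw [abs_of_nonneg (hM k j (Finset.ne_of_mem_erase hj).symm)]
  rw [← Finset.sum_div, hoff, div_lt_iff₀ hξk]
  linarith

theorem stmt0 {n : ℕ} (X : Matrix (Fin n) (Fin n) ℝ) (hM : IsMetzler X)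
    (ξ : Fin n → ℝ) (hξ : ∀ i, 0 < ξ i) (hXξ : ∀ i, (X *ᵥ ξ) i < 0) :
    IsHurwitz X := by
  intro z hz
  obtain ⟨k, hk⟩ := eigenvalue_mem_ball_weighted (w := fun i => (ξ i : ℂ))
    (fun i => Complex.ofReal_ne_zero.mpr (hξ i).ne') (mem_matSpec_iff_hasEigenvalue.mp hz)
  simp only [mem_closedBall_iff_norm, map_apply, Complex.norm_real, Real.norm_eq_abs,
    abs_of_pos (hξ _)] at hk
  have hradius := hM.sum_erase_abs_mul_div_lt (hξ k) (hXξ k)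
  have hre := Complex.re_le_norm (z - X k k)
  rw [Complex.sub_re, Complex.ofReal_re] at hre
  linarith
end

section
/- Let X be an n×n irreducible Metzler matrix whose spectral abscissa μ(X) = max{Re(λ) : λ ∈ σ(X)} equals 0. Then there exists a positive diagonal matrix R such that Xᵀ R + R X is negative semidefinite. -/
open Matrix Set Filter

/-
A shift `B = X + c` with `c` large is nonnegative, irreducible and has positive diagonal, so
`B ^ (n - 1)` maps every nonzero nonnegative vector to a positive one. For an eigenvector `u` of
an eigenvalue on the imaginary axis, `y = |u|` satisfies `X y ≥ 0`, and `w = B ^ (n - 1) y > 0`.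
If `X w ≠ 0`, then `X w = B ^ (n - 1) (X y)` is positive, so `X w ≥ ε w`; by the
Collatz–Wielandt bound (from Gelfand's formula) `X + c` then has an eigenvalue of modulus
`≥ c + ε`, which for large `c` forces an eigenvalue of `X` with positive real part. Hence
`X v = 0` and `Xᵀ w = 0` for positive `v`, `w`. With `R = diag (w / v)` the matrix
`M = Xᵀ R + R X` is symmetric, Metzler and `M v = 0`, and then
`uᵀ M u = -½ ∑ M i j v i v j (u i / v i - u j / v j)² ≤ 0`.
-/

open Topology

theorem Matrix.spectrum_transpose {ι R : Type*} [Fintype ι] [DecidableEq ι] [CommRing R]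
    (A : Matrix ι ι R) : spectrum R Aᵀ = spectrum R A := by
  ext z
  simp only [spectrum.mem_iff, Algebra.algebraMap_eq_smul_one]
  rw [← isUnit_transpose, transpose_sub, transpose_smul, transpose_one, transpose_transpose]

theorem Matrix.exists_mulVec_eq_smul_of_mem_spectrum {ι K : Type*} [Fintype ι] [DecidableEq ι]
    [Field K] {A : Matrix ι ι K} {z : K} (hz : z ∈ spectrum K A) :
    ∃ u : ι → K, u ≠ 0 ∧ A *ᵥ u = z • u := by
  rw [← spectrum_toLin', ← Module.End.hasEigenvalue_iff_mem_spectrum] at hz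
  obtain ⟨u, hu⟩ := hz.exists_hasEigenvector
  exact ⟨u, hu.2, by simpa using hu.apply_eq_smul⟩

theorem Matrix.spectrum_nonempty {ι K : Type*} [Fintype ι] [DecidableEq ι] [Nonempty ι]
    [Field K] [IsAlgClosed K] (A : Matrix ι ι K) : (spectrum K A).Nonempty := by
  obtain ⟨z, hz⟩ := Module.End.exists_eigenvalue A.toLin'
  exact ⟨z, by rwa [← spectrum_toLin', ← Module.End.hasEigenvalue_iff_mem_spectrum]⟩

section matSpec

variable {n : ℕ} (X : Matrix (Fin n) (Fin n) ℝ)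

theorem matSpec_transpose : matSpec Xᵀ = matSpec X := by
  rw [matSpec, matSpec, transpose_map, spectrum_transpose]

theorem spectralAbscissa_transpose : spectralAbscissa Xᵀ = spectralAbscissa X := by
  rw [spectralAbscissa, spectralAbscissa, matSpec_transpose]

theorem matSpec_finite : (matSpec X).Finite :=
  finite_spectrum _

theorem re_le_spectralAbscissa {z : ℂ} (hz : z ∈ matSpec X) : z.re ≤ spectralAbscissa X :=
  le_csSup ((matSpec_finite X).image _).bddAbove (mem_image_of_mem _ hz)

theorem exists_re_eq_spectralAbscissa [NeZero n] :
    ∃ z ∈ matSpec X, z.re = spectralAbscissa X :=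
  ((spectrum_nonempty _).image _).csSup_mem ((matSpec_finite X).image _)

theorem map_ofReal_add_smul_one (c : ℝ) :
    (X + c • 1).map Complex.ofReal = X.map Complex.ofReal + (c : ℂ) • 1 := by
  ext i j
  rcases eq_or_ne i j with rfl | hij <;> simp [one_apply, *]

theorem add_mem_matSpec_add_smul_one_iff {z : ℂ} {c : ℝ} :
    z + c ∈ matSpec (X + c • 1) ↔ z ∈ matSpec X := by
  rw [matSpec, map_ofReal_add_smul_one, add_comm, ← Algebra.algebraMap_eq_smul_one,
    spectrum.add_mem_add_iff, matSpec]

end matSpec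

theorem exists_forall_neg_diag_lt {n : ℕ} (X : Matrix (Fin n) (Fin n) ℝ) :
    ∃ c : ℝ, ∀ i, -X i i < c :=
  (eventually_all.2 fun i => eventually_gt_atTop (-X i i)).exists (f := atTop)

section Metzler

variable {n : ℕ} {X : Matrix (Fin n) (Fin n) ℝ}

theorem IsMetzler.transpose (hM : IsMetzler X) : IsMetzler Xᵀ :=
  fun i j hij => hM j i hij.symm

theorem IsMetzler.add_smul_one_nonneg (hM : IsMetzler X) {c : ℝ} (hc : ∀ i, -X i i ≤ c)
    (i j : Fin n) : 0 ≤ (X + c • 1) i j := by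
  rcases eq_or_ne i j with rfl | hij
  · simpa [neg_le_iff_add_nonneg, add_comm] using hc i
  · simpa [one_apply_ne hij] using hM i j hij

theorem add_smul_one_mulVec (c : ℝ) (v : Fin n → ℝ) :
    (X + c • 1) *ᵥ v = X *ᵥ v + c • v := by
  rw [add_mulVec, smul_mulVec, one_mulVec]

theorem IsMetzler.re_smul_le_mulVec_norm (hM : IsMetzler X) {u : Fin n → ℂ} {z : ℂ}
    (hu : X.map Complex.ofReal *ᵥ u = z • u) :
    z.re • (fun i => ‖u i‖) ≤ X *ᵥ fun i => ‖u i‖ := by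
  obtain ⟨c, hc⟩ := exists_forall_neg_diag_lt X
  have hA := hM.add_smul_one_nonneg fun i => (hc i).le
  intro i
  have hzc : (z + c) * u i = ∑ j, ((X + c • 1) i j : ℂ) * u j := by
    have hAu : (X + c • 1).map Complex.ofReal *ᵥ u = (z + c) • u := by
      rw [map_ofReal_add_smul_one, add_mulVec, hu, smul_mulVec, one_mulVec, add_smul]
    simpa [mulVec, dotProduct] using (congrFun hAu i).symm
  have key : (z.re + c) * ‖u i‖ ≤ ((X + c • 1) *ᵥ fun j => ‖u j‖) i :=
    calc (z.re + c) * ‖u i‖ ≤ ‖(z + c) * u i‖ := by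
          rw [norm_mul]
          gcongr
          simpa using Complex.re_le_norm (z + c)
      _ ≤ ∑ j, ‖((X + c • 1) i j : ℂ) * u j‖ := hzc ▸ norm_sum_le _ _
      _ = ((X + c • 1) *ᵥ fun j => ‖u j‖) i := by
          simp_rw [norm_mul, Complex.norm_of_nonneg (hA i _)]
          rfl
  rw [add_smul_one_mulVec] at key
  simp only [Pi.add_apply, Pi.smul_apply, smul_eq_mul] at key ⊢
  linarith

end Metzler

section Irreducible

variable {n : ℕ} {X : Matrix (Fin n) (Fin n) ℝ}

theorem MatIrreducible.exists_notMem_mem_ne_zero (hI : MatIrreducible X) {S : Finset (Fin n)}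
    (hS : S.Nonempty) (hSu : S ≠ Finset.univ) : ∃ i ∉ S, ∃ j ∈ S, X i j ≠ 0 := by
  obtain ⟨i, hi, j, hj, hXij⟩ := hI Sᶜ
    ((Finset.compl_ne_univ_iff_nonempty Sᶜ).1 (by rwa [compl_compl]))
    ((Finset.compl_ne_univ_iff_nonempty S).2 hS)
  exact ⟨i, Finset.mem_compl.1 hi, j, by simpa using hj, hXij⟩

theorem MatIrreducible.transpose (hI : MatIrreducible X) : MatIrreducible Xᵀ := fun _ hS hSu =>
  let ⟨i, hi, j, hj, hXij⟩ := hI.exists_notMem_mem_ne_zero hS hSu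
  ⟨j, hj, i, hi, hXij⟩

theorem MatIrreducible.congr_offDiag (hI : MatIrreducible X) {Y : Matrix (Fin n) (Fin n) ℝ}
    (h : ∀ i j, i ≠ j → Y i j = X i j) : MatIrreducible Y := by
  intro S hS hSu
  obtain ⟨i, hi, j, hj, hXij⟩ := hI S hS hSu
  exact ⟨i, hi, j, hj, by rwa [h i j (ne_of_mem_of_not_mem hi hj)]⟩

end Irreducible

section Positivity

variable {ι : Type*} [Fintype ι] {B : Matrix ι ι ℝ}

theorem mulVec_nonneg (hB : ∀ i j, 0 ≤ B i j) {y : ι → ℝ} (hy : 0 ≤ y) : 0 ≤ B *ᵥ y :=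
  fun i => dotProduct_nonneg_of_nonneg (hB i) hy

theorem mulVec_mono (hB : ∀ i j, 0 ≤ B i j) {v w : ι → ℝ} (hvw : v ≤ w) : B *ᵥ v ≤ B *ᵥ w :=
  fun i => dotProduct_le_dotProduct_of_nonneg_left hvw (hB i)

theorem mul_le_mulVec_apply (hB : ∀ i j, 0 ≤ B i j) {y : ι → ℝ} (hy : 0 ≤ y) (i j : ι) :
    B i j * y j ≤ (B *ᵥ y) i :=
  Finset.single_le_sum (f := fun j => B i j * y j) (fun k _ => mul_nonneg (hB i k) (hy k))
    (Finset.mem_univ j)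

noncomputable def posSupport (y : ι → ℝ) : Finset ι := {i | 0 < y i}

theorem mem_posSupport {y : ι → ℝ} {i : ι} : i ∈ posSupport y ↔ 0 < y i := by
  simp [posSupport]

theorem posSupport_subset_mulVec (hB : ∀ i j, 0 ≤ B i j) (hBd : ∀ i, 0 < B i i)
    {y : ι → ℝ} (hy : 0 ≤ y) : posSupport y ⊆ posSupport (B *ᵥ y) := by
  intro i hi
  rw [mem_posSupport] at hi ⊢
  exact (mul_pos (hBd i) hi).trans_le (mul_le_mulVec_apply hB hy i i)

end Positivity

section PowerPositivity

variable {n : ℕ} {B : Matrix (Fin n) (Fin n) ℝ}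

theorem posSupport_ssubset_mulVec (hB : ∀ i j, 0 ≤ B i j) (hBd : ∀ i, 0 < B i i)
    (hI : MatIrreducible B) {y : Fin n → ℝ} (hy : 0 ≤ y) (hne : (posSupport y).Nonempty)
    (hnu : posSupport y ≠ Finset.univ) : posSupport y ⊂ posSupport (B *ᵥ y) := by
  obtain ⟨i, hi, j, hj, hBij⟩ := hI.exists_notMem_mem_ne_zero hne hnu
  refine (Finset.ssubset_iff_of_subset (posSupport_subset_mulVec hB hBd hy)).2
    ⟨i, mem_posSupport.2 ?_, hi⟩
  exact (mul_pos ((hB i j).lt_of_ne' hBij) (mem_posSupport.1 hj)).trans_le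
    (mul_le_mulVec_apply hB hy i j)

theorem min_le_card_posSupport_pow_mulVec (hB : ∀ i j, 0 ≤ B i j) (hBd : ∀ i, 0 < B i i)
    (hI : MatIrreducible B) {y : Fin n → ℝ} (hy : 0 ≤ y) (hne : (posSupport y).Nonempty) :
    ∀ k : ℕ, min n (k + 1) ≤ (posSupport (B ^ k *ᵥ y)).card
  | 0 => by rw [pow_zero, one_mulVec]; exact min_le_iff.2 (Or.inr hne.card_pos)
  | k + 1 => by
    have ih := min_le_card_posSupport_pow_mulVec hB hBd hI hy hne k
    have hz : 0 ≤ B ^ k *ᵥ y := mulVec_nonneg (pow_apply_nonneg hB k) hy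
    rw [pow_succ', ← mulVec_mulVec]
    set z := B ^ k *ᵥ y
    by_cases hzu : posSupport z = Finset.univ
    · have := posSupport_subset_mulVec hB hBd hz
      rw [hzu, Finset.univ_subset_iff] at this
      simp [this]
    · have hzne : (posSupport z).Nonempty := by
        have hn : 0 < n := hne.choose.pos
        exact Finset.card_pos.1 (by omega)
      have := Finset.card_lt_card (posSupport_ssubset_mulVec hB hBd hI hz hzne hzu)
      omega

theorem pow_mulVec_pos (hB : ∀ i j, 0 ≤ B i j) (hBd : ∀ i, 0 < B i i) (hI : MatIrreducible B)
    {y : Fin n → ℝ} (hy : 0 ≤ y) (hy0 : y ≠ 0) (i : Fin n) : 0 < (B ^ (n - 1) *ᵥ y) i := by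
  obtain ⟨j, hj⟩ := Function.ne_iff.1 hy0
  have hne : (posSupport y).Nonempty := ⟨j, mem_posSupport.2 ((hy j).lt_of_ne' hj)⟩
  have hcard := min_le_card_posSupport_pow_mulVec hB hBd hI hy hne (n - 1)
  have huniv : posSupport (B ^ (n - 1) *ᵥ y) = Finset.univ := by
    refine Finset.eq_univ_of_card _ (le_antisymm (Finset.card_le_univ _) ?_)
    rw [Fintype.card_fin]
    have := i.pos
    omega
  exact mem_posSupport.1 (huniv ▸ Finset.mem_univ i)

end PowerPositivity

theorem spectrum.exists_le_norm_of_le_norm_pow {A : Type*} [NormedRing A] [NormedAlgebra ℂ A]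
    [CompleteSpace A] [Nontrivial A] (a : A) {θ m : ℝ} (hθ : 0 ≤ θ) (hm : 0 < m)
    (h : ∀ k : ℕ, m * θ ^ k ≤ ‖a ^ k‖) : ∃ z ∈ spectrum ℂ a, θ ≤ ‖z‖ := by
  have hlim : Tendsto (fun k : ℕ => m ^ (1 / k : ℝ) * θ) atTop (𝓝 θ) := by
    simpa using (tendsto_const_nhds.rpow tendsto_one_div_atTop_nhds_zero_nat
      (Or.inl hm.ne')).mul_const θ
  have hle : ∀ k : ℕ, 1 ≤ k → m ^ (1 / k : ℝ) * θ ≤ ‖a ^ k‖ ^ (1 / k : ℝ) := fun k hk =>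
    calc m ^ (1 / k : ℝ) * θ = (m * θ ^ k) ^ (1 / k : ℝ) := by
          rw [Real.mul_rpow hm.le (by positivity), ← Real.rpow_natCast, ← Real.rpow_mul hθ,
            mul_one_div_cancel (by positivity), Real.rpow_one]
      _ ≤ ‖a ^ k‖ ^ (1 / k : ℝ) := by gcongr; exact h k
  have hρ : ENNReal.ofReal θ ≤ spectralRadius ℂ a :=
    le_of_tendsto_of_tendsto ((ENNReal.continuous_ofReal.tendsto θ).comp hlim)
      (spectrum.pow_norm_pow_one_div_tendsto_nhds_spectralRadius a)
      (eventually_atTop.2 ⟨1, fun k hk => ENNReal.ofReal_le_ofReal (hle k hk)⟩)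
  obtain ⟨z, hz, hzρ⟩ := spectrum.exists_nnnorm_eq_spectralRadius a
  refine ⟨z, hz, ?_⟩
  rw [← hzρ, ENNReal.ofReal_le_iff_le_toReal ENNReal.coe_ne_top] at hρ
  simpa using hρ

section CollatzWielandt

variable {ι : Type*} [Fintype ι] [DecidableEq ι] {A : Matrix ι ι ℝ}

theorem pow_smul_le_pow_mulVec (hA : ∀ i j, 0 ≤ A i j) {θ : ℝ} (hθ : 0 ≤ θ) {w : ι → ℝ}
    (h : θ • w ≤ A *ᵥ w) : ∀ k : ℕ, θ ^ k • w ≤ A ^ k *ᵥ w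
  | 0 => by simp
  | k + 1 =>
    calc θ ^ (k + 1) • w = θ ^ k • θ • w := by rw [pow_succ, mul_smul]
      _ ≤ θ ^ k • A *ᵥ w := smul_le_smul_of_nonneg_left h (pow_nonneg hθ k)
      _ = A *ᵥ θ ^ k • w := (mulVec_smul A _ w).symm
      _ ≤ A *ᵥ (A ^ k *ᵥ w) := mulVec_mono hA (pow_smul_le_pow_mulVec hA hθ h k)
      _ = A ^ (k + 1) *ᵥ w := by rw [mulVec_mulVec, pow_succ']

attribute [local instance] Matrix.linftyOpNormedRing Matrix.linftyOpNormedAlgebra in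
theorem exists_le_norm_mem_spectrum_of_smul_le_mulVec (hA : ∀ i j, 0 ≤ A i j) {θ : ℝ}
    (hθ : 0 ≤ θ) {w : ι → ℝ} (hw : 0 ≤ w) (hw0 : w ≠ 0) (h : θ • w ≤ A *ᵥ w) :
    ∃ z ∈ spectrum ℂ (A.map Complex.ofReal), θ ≤ ‖z‖ := by
  obtain ⟨i, hi⟩ := Function.ne_iff.1 hw0
  replace hi : 0 < w i := (hw i).lt_of_ne' hi
  have : Nonempty ι := ⟨i⟩
  set wc : ι → ℂ := Complex.ofReal ∘ w
  have hwc : 0 < ‖wc‖ := norm_pos_iff.2 fun h0 => hi.ne' (by simpa [wc] using congrFun h0 i)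
  refine spectrum.exists_le_norm_of_le_norm_pow _ hθ (div_pos hi hwc) fun k => ?_
  rw [div_mul_eq_mul_div, div_le_iff₀ hwc]
  have hmap : (A.map Complex.ofReal) ^ k = (A ^ k).map Complex.ofReal :=
    (map_pow Complex.ofRealHom.mapMatrix A k).symm
  calc w i * θ ^ k ≤ (A ^ k *ᵥ w) i := by
        simpa [mul_comm] using pow_smul_le_pow_mulVec hA hθ h k i
    _ ≤ ‖(((A ^ k *ᵥ w) i : ℝ) : ℂ)‖ := by simpa using le_abs_self _
    _ = ‖(A.map Complex.ofReal ^ k *ᵥ wc) i‖ := by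
        rw [hmap]; exact congrArg _ (RingHom.map_mulVec Complex.ofRealHom _ _ i)
    _ ≤ ‖A.map Complex.ofReal ^ k *ᵥ wc‖ := norm_le_pi_norm _ i
    _ ≤ ‖A.map Complex.ofReal ^ k‖ * ‖wc‖ := linfty_opNorm_mulVec _ _

end CollatzWielandt

theorem Complex.eventually_norm_add_lt {z : ℂ} (hz : z.re ≤ 0) {ε : ℝ} (hε : 0 < ε) :
    ∀ᶠ c : ℝ in atTop, ‖z + c‖ < c + ε := by
  filter_upwards [eventually_ge_atTop 0, eventually_ge_atTop (‖z‖ ^ 2 / (2 * ε))] with c hc₀ hc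
  have hsq : ‖z + c‖ ^ 2 = ‖z‖ ^ 2 + 2 * c * z.re + c ^ 2 := by
    simp only [Complex.sq_norm, Complex.normSq_apply, Complex.add_re, Complex.add_im,
      Complex.ofReal_re, Complex.ofReal_im, add_zero]
    ring
  rw [div_le_iff₀ (by positivity)] at hc
  refine lt_of_pow_lt_pow_left₀ 2 (by positivity) ?_
  nlinarith [mul_nonpos_of_nonneg_of_nonpos hc₀ hz]

section Perron

variable {n : ℕ} {X : Matrix (Fin n) (Fin n) ℝ}

theorem IsMetzler.exists_re_pos_of_mulVec_pos [NeZero n] (hM : IsMetzler X) {w : Fin n → ℝ}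
    (hw : ∀ i, 0 < w i) (hXw : ∀ i, 0 < (X *ᵥ w) i) : ∃ z ∈ matSpec X, 0 < z.re := by
  by_contra! hre
  obtain ⟨i₀, hi₀⟩ := Finite.exists_min fun i => (X *ᵥ w) i / w i
  set ε := (X *ᵥ w) i₀ / w i₀
  have hε : 0 < ε := div_pos (hXw i₀) (hw i₀)
  have hεw : ε • w ≤ X *ᵥ w := fun i => by simpa [le_div_iff₀ (hw i)] using hi₀ i
  obtain ⟨c, hcX, hc₀, hc⟩ := ((eventually_all.2 fun i => eventually_ge_atTop (-X i i)).and
    ((eventually_ge_atTop 0).and ((eventually_all_finite (matSpec_finite X)).2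
      fun z hz => Complex.eventually_norm_add_lt (hre z hz) hε))).exists
  have hcw : (c + ε) • w ≤ (X + c • 1) *ᵥ w := by
    rw [add_smul_one_mulVec, add_smul, add_comm]
    exact add_le_add_left hεw _
  obtain ⟨z, hz, hcz⟩ := exists_le_norm_mem_spectrum_of_smul_le_mulVec
    (hM.add_smul_one_nonneg hcX) (by positivity) (fun i => (hw i).le)
    (fun h0 => (hw 0).ne' (congrFun h0 0)) hcw
  have hzc : z - c ∈ matSpec X := (add_mem_matSpec_add_smul_one_iff X).1 (by rwa [sub_add_cancel])
  exact (hc _ hzc).not_ge (by rwa [sub_add_cancel])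

theorem IsMetzler.exists_pos_mulVec_eq_zero (hM : IsMetzler X) (hI : MatIrreducible X)
    (hμ : spectralAbscissa X = 0) : ∃ v : Fin n → ℝ, (∀ i, 0 < v i) ∧ X *ᵥ v = 0 := by
  rcases n with _ | n
  · exact ⟨0, finZeroElim, Subsingleton.elim _ _⟩
  obtain ⟨z₀, hz₀, hre⟩ := exists_re_eq_spectralAbscissa X
  obtain ⟨u, hu0, hu⟩ := exists_mulVec_eq_smul_of_mem_spectrum hz₀
  set y : Fin (n + 1) → ℝ := fun i => ‖u i‖
  have hy : 0 ≤ y := fun i => norm_nonneg _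
  have hy0 : y ≠ 0 := fun h0 => hu0 (funext fun i => norm_eq_zero.1 (congrFun h0 i))
  have hXy : 0 ≤ X *ᵥ y := by simpa [hre, hμ] using hM.re_smul_le_mulVec_norm hu
  obtain ⟨c, hc⟩ := exists_forall_neg_diag_lt X
  set B := X + c • 1
  have hB : ∀ i j, 0 ≤ B i j := hM.add_smul_one_nonneg fun i => (hc i).le
  have hBd : ∀ i, 0 < B i i := fun i => by simpa [B, neg_lt_iff_pos_add, add_comm] using hc i
  have hBI : MatIrreducible B := hI.congr_offDiag fun i j hij => by simp [B, one_apply_ne hij]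
  have hXB : X *ᵥ (B ^ n *ᵥ y) = B ^ n *ᵥ (X *ᵥ y) := by
    rw [mulVec_mulVec, mulVec_mulVec, (((Commute.refl X).add_right
      ((Commute.one_right X).smul_right c)).pow_right n).eq]
  refine ⟨B ^ n *ᵥ y, pow_mulVec_pos hB hBd hBI hy hy0, ?_⟩
  by_contra hXw
  rw [hXB] at hXw
  have hXy0 : X *ᵥ y ≠ 0 := fun h0 => hXw (by rw [h0, mulVec_zero])
  obtain ⟨z, hz, hz0⟩ := hM.exists_re_pos_of_mulVec_pos (pow_mulVec_pos hB hBd hBI hy hy0)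
    (hXB ▸ pow_mulVec_pos hB hBd hBI hXy hXy0)
  exact hz0.not_ge (hμ ▸ re_le_spectralAbscissa X hz)

end Perron

section Lyapunov

variable {n : ℕ}

theorem IsMetzler.dotProduct_mulVec_nonpos {M : Matrix (Fin n) (Fin n) ℝ} (hM : IsMetzler M)
    (hsym : M.IsSymm) {v : Fin n → ℝ} (hv : ∀ i, 0 < v i) (hMv : M *ᵥ v = 0) (u : Fin n → ℝ) :
    u ⬝ᵥ (M *ᵥ u) ≤ 0 := by
  set s : Fin n → ℝ := fun i => u i / v i
  have hu : ∀ i, u i = s i * v i := fun i => (div_mul_cancel₀ _ (hv i).ne').symm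
  have hrow : ∀ i, ∑ j, M i j * v j = 0 := fun i => congrFun hMv i
  have hcol : ∀ j, ∑ i, M i j * v i = 0 := fun j => by simpa [hsym.apply] using hrow j
  have hterm : ∀ i j, M i j * u i * u j = (v i * s i ^ 2 * (M i j * v j)
      + v j * s j ^ 2 * (M i j * v i) - M i j * v i * v j * (s i - s j) ^ 2) / 2 := by
    intro i j
    rw [hu i, hu j]
    ring
  have hsq : 0 ≤ ∑ i, ∑ j, M i j * v i * v j * (s i - s j) ^ 2 := by
    refine Finset.sum_nonneg fun i _ => Finset.sum_nonneg fun j _ => ?_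
    rcases eq_or_ne i j with rfl | hij
    · simp
    · have := hM i j hij
      have := hv i
      have := hv j
      positivity
  calc u ⬝ᵥ (M *ᵥ u) = ∑ i, ∑ j, M i j * u i * u j := by
        simp only [dotProduct, mulVec, Finset.mul_sum]
        exact Finset.sum_congr rfl fun i _ => Finset.sum_congr rfl fun j _ => by ring
    _ = (∑ i, v i * s i ^ 2 * ∑ j, M i j * v j + ∑ j, v j * s j ^ 2 * ∑ i, M i j * v i
          - ∑ i, ∑ j, M i j * v i * v j * (s i - s j) ^ 2) / 2 := by
        simp only [hterm, Finset.mul_sum, ← Finset.sum_div, Finset.sum_sub_distrib,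
          Finset.sum_add_distrib]
        rw [Finset.sum_comm (f := fun i j => v j * s j ^ 2 * (M i j * v i))]
    _ ≤ 0 := by simp only [hrow, hcol, mul_zero, Finset.sum_const_zero]; linarith

theorem IsMetzler.transpose_mul_diagonal_add_diagonal_mul {X : Matrix (Fin n) (Fin n) ℝ}
    (hM : IsMetzler X) {r : Fin n → ℝ} (hr : 0 ≤ r) :
    IsMetzler (Xᵀ * diagonal r + diagonal r * X) := by
  intro i j hij
  simp only [Matrix.add_apply, mul_diagonal, diagonal_mul, transpose_apply]
  exact add_nonneg (mul_nonneg (hM j i hij.symm) (hr j)) (mul_nonneg (hr i) (hM i j hij))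

end Lyapunov

theorem stmt2 {n : ℕ} (X : Matrix (Fin n) (Fin n) ℝ) (hM : IsMetzler X)
    (hI : MatIrreducible X) (hμ : spectralAbscissa X = 0) :
    ∃ r : Fin n → ℝ, (∀ i, 0 < r i) ∧
      ∀ v : Fin n → ℝ,
        v ⬝ᵥ ((Xᵀ * Matrix.diagonal r + Matrix.diagonal r * X) *ᵥ v) ≤ 0 := by
  obtain ⟨v, hv, hXv⟩ := hM.exists_pos_mulVec_eq_zero hI hμ
  obtain ⟨w, hw, hXw⟩ := hM.transpose.exists_pos_mulVec_eq_zero hI.transpose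
    ((spectralAbscissa_transpose X).trans hμ)
  set r : Fin n → ℝ := fun i => w i / v i
  have hr : ∀ i, 0 < r i := fun i => div_pos (hw i) (hv i)
  have hrv : diagonal r *ᵥ v = w := funext fun i => by
    simp [r, mulVec_diagonal, div_mul_cancel₀ _ (hv i).ne']
  refine ⟨r, hr, hM.transpose_mul_diagonal_add_diagonal_mul (fun i => (hr i).le)
    |>.dotProduct_mulVec_nonpos ?_ hv ?_⟩
  · simp [IsSymm, transpose_add, transpose_mul, add_comm]
  · rw [add_mulVec, ← mulVec_mulVec, ← mulVec_mulVec, hrv, hXw, hXv, mulVec_zero, add_zero]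
end

section
/- Let A be a nonnegative irreducible n×n matrix with zero diagonal, B and D positive diagonal matrices, and p* ∈ (0,1)ⁿ a strictly positive equilibrium of ṗ = (AᵀB − D)p − diag(p)AᵀB p. Then the Jacobian at p*, J(p*) = −(I − P*)^{-1}D + (I − P*)AᵀB with P* = diag(p*), satisfies J(p*) p* = −P* AᵀB p* ≪ 0, and consequently J(p*) is Hurwitz. -/
open Matrix Set Filter

/-!
At the equilibrium, `(1 - pᵢ) (M p)ᵢ = δᵢ pᵢ` with `M = Aᵀ B`, so the term `-(I - P)⁻¹ D p` of
`J p` equals `-M p` and `J p = -P M p ≪ 0`. Off the diagonal `J = (I - P) M ≥ 0`, so `J` is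
Metzler, and a Metzler matrix with `J p ≪ 0` for some `p ≫ 0` is Hurwitz: scaling the columns by
`p` makes `z - J` strictly diagonally dominant by rows whenever `Re z ≥ 0`, hence invertible.
-/

theorem IsMetzler.isHurwitz_of_mulVec_neg {n : ℕ} {X : Matrix (Fin n) (Fin n) ℝ}
    (hX : IsMetzler X) {p : Fin n → ℝ} (hp : ∀ i, 0 < p i) (hXp : ∀ i, (X *ᵥ p) i < 0) :
    IsHurwitz X := by
  intro z hz
  by_contra! hre
  set Y : Matrix (Fin n) (Fin n) ℂ :=
    (algebraMap ℂ _ z - X.map Complex.ofReal) * diagonal fun j => (p j : ℂ)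
  have hY_diag : ∀ k, ‖Y k k‖ = ‖z - X k k‖ * p k := fun k => by
    simp [Y, mul_diagonal, algebraMap_matrix_apply, abs_of_pos (hp k)]
  have hY_offdiag : ∀ k j, j ≠ k → ‖Y k j‖ = X k j * p j := fun k j hjk => by
    simp [Y, mul_diagonal, algebraMap_matrix_apply, hjk.symm, abs_of_pos (hp j),
      abs_of_nonneg (hX k j hjk.symm)]
  have hY : ∀ k, ∑ j ∈ Finset.univ.erase k, ‖Y k j‖ < ‖Y k k‖ := fun k => by
    have hrow := hXp k
    rw [mulVec, dotProduct, ← Finset.add_sum_erase _ _ (Finset.mem_univ k)] at hrow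
    have hre_le : z.re - X k k ≤ ‖z - X k k‖ := by
      simpa using Complex.re_le_norm (z - X k k)
    rw [Finset.sum_congr rfl fun j hj => hY_offdiag k j (Finset.ne_of_mem_erase hj), hY_diag]
    nlinarith [hp k]
  apply spectrum.mem_iff.mp hz
  rw [Matrix.isUnit_iff_isUnit_det, isUnit_iff_ne_zero]
  have hdet := det_ne_zero_of_sum_row_lt_diag hY
  rw [det_mul] at hdet
  exact left_ne_zero_of_mul hdet

namespace SIS

variable {ι : Type*} [DecidableEq ι]

lemma one_sub_diagonal (p : ι → ℝ) :
    (1 : Matrix ι ι ℝ) - diagonal p = diagonal fun i => 1 - p i := by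
  rw [← diagonal_one, diagonal_sub]

variable [Fintype ι]

noncomputable def jacobian (M : Matrix ι ι ℝ) (δ p : ι → ℝ) : Matrix ι ι ℝ :=
  -(1 - diagonal p)⁻¹ * diagonal δ + (1 - diagonal p) * M

lemma inv_one_sub_diagonal {p : ι → ℝ} (hp : ∀ i, p i ≠ 1) :
    (1 - diagonal p)⁻¹ = diagonal fun i => (1 - p i)⁻¹ := by
  rw [one_sub_diagonal]
  refine inv_eq_left_inv ?_
  rw [diagonal_mul_diagonal, ← diagonal_one]
  exact congrArg diagonal (funext fun i => inv_mul_cancel₀ (sub_ne_zero.mpr (hp i).symm))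

variable {M : Matrix ι ι ℝ} {δ p : ι → ℝ}

lemma equilibrium_apply (heq : (M - diagonal δ) *ᵥ p - diagonal p *ᵥ (M *ᵥ p) = 0) (i : ι) :
    (1 - p i) * (M *ᵥ p) i = δ i * p i := by
  have h := congrFun heq i
  simp only [sub_mulVec, Pi.sub_apply, mulVec_diagonal, Pi.zero_apply] at h
  linarith

lemma mulVec_pos_of_equilibrium (heq : (M - diagonal δ) *ᵥ p - diagonal p *ᵥ (M *ᵥ p) = 0)
    {i : ι} (hδ : 0 < δ i) (hp₀ : 0 < p i) (hp₁ : p i < 1) : 0 < (M *ᵥ p) i :=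
  pos_of_mul_pos_right (equilibrium_apply heq i ▸ mul_pos hδ hp₀) (sub_pos.mpr hp₁).le

lemma jacobian_mulVec_of_equilibrium (hp : ∀ i, p i ≠ 1)
    (heq : (M - diagonal δ) *ᵥ p - diagonal p *ᵥ (M *ᵥ p) = 0) :
    jacobian M δ p *ᵥ p = -(diagonal p *ᵥ (M *ᵥ p)) := by
  funext i
  have hq : 1 - p i ≠ 0 := sub_ne_zero.mpr (hp i).symm
  have hMp : (1 - p i)⁻¹ * (δ i * p i) = (M *ᵥ p) i := by
    rw [← equilibrium_apply heq i, inv_mul_cancel_left₀ hq]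
  rw [jacobian, inv_one_sub_diagonal hp, one_sub_diagonal]
  simp only [add_mulVec, neg_mul, neg_mulVec, ← mulVec_mulVec, Pi.add_apply, Pi.neg_apply,
    mulVec_diagonal, hMp]
  ring

lemma jacobian_apply_of_ne (hp : ∀ i, p i ≠ 1) {i j : ι} (hij : i ≠ j) :
    jacobian M δ p i j = (1 - p i) * M i j := by
  rw [jacobian, inv_one_sub_diagonal hp, one_sub_diagonal]
  simp [diagonal_mul_diagonal, diagonal_mul, hij]

lemma isMetzler_jacobian {n : ℕ} {M : Matrix (Fin n) (Fin n) ℝ} {δ p : Fin n → ℝ}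
    (hM : ∀ i j, 0 ≤ M i j) (hp : ∀ i, p i < 1) : IsMetzler (jacobian M δ p) :=
  fun i j hij => jacobian_apply_of_ne (fun i => (hp i).ne) hij ▸
    mul_nonneg (sub_pos.mpr (hp i)).le (hM i j)

end SIS

open SIS in
theorem stmt11_general {n : ℕ} (A : Matrix (Fin n) (Fin n) ℝ) (hA : ∀ i j, 0 ≤ A i j)
    (β δ : Fin n → ℝ) (hβ : ∀ i, 0 < β i) (hδ : ∀ i, 0 < δ i)
    (p : Fin n → ℝ) (hp : ∀ i, 0 < p i ∧ p i < 1)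
    (heq : (Aᵀ * Matrix.diagonal β - Matrix.diagonal δ) *ᵥ p -
      Matrix.diagonal p *ᵥ ((Aᵀ * Matrix.diagonal β) *ᵥ p) = 0)
    (J : Matrix (Fin n) (Fin n) ℝ)
    (hJ : J = -(1 - Matrix.diagonal p)⁻¹ * Matrix.diagonal δ +
      (1 - Matrix.diagonal p) * (Aᵀ * Matrix.diagonal β)) :
    J *ᵥ p = -(Matrix.diagonal p *ᵥ ((Aᵀ * Matrix.diagonal β) *ᵥ p)) ∧
      (∀ i, (J *ᵥ p) i < 0) ∧ IsHurwitz J := by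
  subst hJ
  have hp₁ : ∀ i, p i < 1 := fun i => (hp i).2
  have hJp := jacobian_mulVec_of_equilibrium (fun i => (hp₁ i).ne) heq
  have hJp_neg : ∀ i, (jacobian (Aᵀ * diagonal β) δ p *ᵥ p) i < 0 := fun i => by
    rw [hJp, Pi.neg_apply, mulVec_diagonal, neg_lt_zero]
    exact mul_pos (hp i).1 (mulVec_pos_of_equilibrium heq (hδ i) (hp i).1 (hp₁ i))
  have hM : ∀ i j, 0 ≤ (Aᵀ * diagonal β) i j := fun i j => by
    rw [mul_diagonal, transpose_apply]
    exact mul_nonneg (hA j i) (hβ j).le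
  exact ⟨hJp, hJp_neg,
    (isMetzler_jacobian hM hp₁).isHurwitz_of_mulVec_neg (fun i => (hp i).1) hJp_neg⟩

theorem stmt11 {n : ℕ} (A : Matrix (Fin n) (Fin n) ℝ) (hA : ∀ i j, 0 ≤ A i j)
    (hAdiag : ∀ i, A i i = 0) (hAirr : MatIrreducible A)
    (β δ : Fin n → ℝ) (hβ : ∀ i, 0 < β i) (hδ : ∀ i, 0 < δ i)
    (p : Fin n → ℝ) (hp : ∀ i, 0 < p i ∧ p i < 1)
    (heq : (Aᵀ * Matrix.diagonal β - Matrix.diagonal δ) *ᵥ p -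
      Matrix.diagonal p *ᵥ ((Aᵀ * Matrix.diagonal β) *ᵥ p) = 0)
    (J : Matrix (Fin n) (Fin n) ℝ)
    (hJ : J = -(1 - Matrix.diagonal p)⁻¹ * Matrix.diagonal δ +
      (1 - Matrix.diagonal p) * (Aᵀ * Matrix.diagonal β)) :
    J *ᵥ p = -(Matrix.diagonal p *ᵥ ((Aᵀ * Matrix.diagonal β) *ᵥ p)) ∧
      (∀ i, (J *ᵥ p) i < 0) ∧ IsHurwitz J :=
  stmt11_general A hA β δ hβ hδ p hp heq J hJ
end
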